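/- arXiv:1502.05510 — 5 statements merged into one kernel-verified Lean document; each statement's English description precedes it below -/
import Mathlib

section
/- Fix a dimension d ≥ 1 and a compact convex set E ⊆ ℝ^d with nonempty interior. Let 𝐂* denote the collection of nonempty compact convex subsets of E, equipped with the Hausdorff metric d_H. Then the σ-algebra on 𝐂* generated by the family of 'brackets' [C] = {A ∈ 𝐂* : A ⊆ C}, C ranging over 𝐂*, equals the Borel σ-algebra of the metric space (𝐂*, d_H). -/
/-- The collection of nonempty compact convex subsets of `E ⊆ ℝ^d`, as a subtype of the
nonempty compact subsets of `ℝ^d`; it inherits the Hausdorff metric. -/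
abbrev ConvexBodiesIn (d : ℕ) (E : Set (EuclideanSpace ℝ (Fin d))) : Type :=
  {K : TopologicalSpace.NonemptyCompacts (EuclideanSpace ℝ (Fin d)) //
    (K : Set (EuclideanSpace ℝ (Fin d))) ⊆ E ∧ Convex ℝ (K : Set (EuclideanSpace ℝ (Fin d)))}

/-!
The Hausdorff metric induces the Vietoris topology on nonempty compact sets, and it is second
countable, so the Borel σ-algebra is generated by the sets `{A | A ⊆ U}` and `{A | A ∩ U ≠ ∅}`
with `U` open. A compact `A` lies in `U` iff it misses some thickening of `Uᶜ`, and an open set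
is a countable union of closed balls, so everything reduces to the event that `A` misses a closed
ball. By Hahn–Banach, a compact convex `A` misses a ball iff it lies in a halfspace `{g ≤ c}`
missing the ball, with `g` from a countable dense set of functionals and `c` rational; and
`A ⊆ {g ≤ c}` is the bracket of the convex body `{g ≤ c} ∩ E`. Conversely, brackets are closed.
-/

open Metric Set TopologicalSpace MeasureTheory

section PseudoMetricSpace

variable {X : Type*} [PseudoMetricSpace X]

theorem IsOpen.exists_countable_biUnion_closedBall [SecondCountableTopology X] {U : Set X}
    (hU : IsOpen U) : ∃ T : Set (X × ℝ), T.Countable ∧ U = ⋃ p ∈ T, closedBall p.1 p.2 := by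
  have : ∀ x : U, ∃ r > 0, closedBall (x : X) r ⊆ U := fun x =>
    nhds_basis_closedBall.mem_iff.1 (hU.mem_nhds x.2)
  choose r hr hrU using this
  obtain ⟨T, hTc, hT⟩ := isOpen_iUnion_countable (fun x : U => ball (x : X) (r x))
    fun _ => isOpen_ball
  refine ⟨(fun x : U => ((x : X), r x)) '' T, hTc.image _, ?_⟩
  rw [biUnion_image]
  refine Subset.antisymm (fun y hy => ?_) (iUnion₂_subset fun x _ => hrU x)
  have : y ∈ ⋃ x ∈ T, ball (x : X) (r x) := hT ▸ mem_iUnion.2 ⟨⟨y, hy⟩, mem_ball_self (hr _)⟩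
  obtain ⟨x, hx, hyx⟩ := mem_iUnion₂.1 this
  exact mem_iUnion₂.2 ⟨x, hx, ball_subset_closedBall hyx⟩

theorem IsCompact.disjoint_iff_exists_disjoint_thickening {K F : Set X} (hK : IsCompact K)
    (hF : IsClosed F) : Disjoint K F ↔ ∃ n : ℕ, Disjoint K (thickening (1 / (n + 1)) F) := by
  refine ⟨fun hKF => ?_, fun ⟨n, hn⟩ => hn.mono_right (self_subset_thickening (by positivity) F)⟩
  obtain ⟨δ, hδ, hthick⟩ := hKF.exists_thickenings hK hF
  obtain ⟨n, hn⟩ := exists_nat_one_div_lt hδ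
  exact ⟨n, hthick.mono (self_subset_thickening hδ K) (thickening_mono hn.le F)⟩

end PseudoMetricSpace

theorem TopologicalSpace.NonemptyCompacts.borel_subtype_eq_generateFrom {α : Type*}
    [TopologicalSpace α] [SecondCountableTopology α] (P : NonemptyCompacts α → Prop) :
    borel (Subtype P) = MeasurableSpace.generateFrom
      ((fun U => {K : Subtype P | (K.1 : Set α) ⊆ U}) '' {U | IsOpen U} ∪
        (fun U => {K : Subtype P | ((K.1 : Set α) ∩ U).Nonempty}) '' {U | IsOpen U}) := by
  have : SecondCountableTopology (Subtype P) :=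
    Topology.IsInducing.subtypeVal.secondCountableTopology
  refine borel_eq_generateFrom_of_subbasis ?_
  change induced _ (induced _ (TopologicalSpace.vietoris α)) = _
  rw [induced_compose, TopologicalSpace.vietoris, induced_generateFrom_eq, image_union,
    image_image, image_image]
  rfl

theorem exists_rat_halfSpace_separating_of_dense {V : Type*} [NormedAddCommGroup V]
    [NormedSpace ℝ V] {S : Set (StrongDual ℝ V)} (hS : Dense S) {A B : Set V}
    (hAc : Convex ℝ A) (hA : IsCompact A) (hBc : Convex ℝ B) (hB : IsClosed B)
    (hBb : Bornology.IsBounded B) (hAB : Disjoint A B) :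
    ∃ g ∈ S, ∃ c : ℚ, A ⊆ {x | g x ≤ c} ∧ Disjoint {x | g x ≤ c} B := by
  obtain ⟨f, u, v, hfA, huv, hfB⟩ := geometric_hahn_banach_compact_closed hAc hA hBc hB hAB
  obtain ⟨R, hR, hxR⟩ := (hA.isBounded.union hBb).exists_pos_norm_le
  set ε := (v - u) / 3 with hε
  obtain ⟨g, hgS, hgf⟩ := hS.exists_dist_lt f (ε := ε / R) (by positivity)
  have hclose : ∀ x ∈ A ∪ B, |g x - f x| ≤ ε := fun x hx => calc
    |g x - f x| = ‖(g - f) x‖ := rfl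
    _ ≤ ‖g - f‖ * ‖x‖ := (g - f).le_opNorm x
    _ ≤ ε / R * R := by
      rw [← dist_eq_norm, dist_comm]
      gcongr
      exact hxR x hx
    _ = ε := div_mul_cancel₀ ε hR.ne'
  obtain ⟨c, hc₁, hc₂⟩ := exists_rat_btwn (show u + ε < v - ε by linarith)
  refine ⟨g, hgS, c, fun x hx => ?_, disjoint_left.2 fun x hx hxB => ?_⟩
  · show g x ≤ c
    linarith [(abs_le.1 (hclose x (.inl hx))).2, hfA x hx]
  · have : (c : ℝ) < g x := by linarith [(abs_le.1 (hclose x (.inr hxB))).1, hfB x hxB]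
    exact absurd hx this.not_ge

namespace ConvexBodiesIn

variable {d : ℕ} {E : Set (EuclideanSpace ℝ (Fin d))}

variable (d E) in
def brackets : Set (Set (ConvexBodiesIn d E)) :=
  {B | ∃ C : ConvexBodiesIn d E, B = {A | ↑A.1 ⊆ (C.1 : Set (EuclideanSpace ℝ (Fin d)))}}

theorem measurableSet_bracket (C : ConvexBodiesIn d E) :
    MeasurableSet[.generateFrom (brackets d E)]
      {A : ConvexBodiesIn d E | ↑A.1 ⊆ (C.1 : Set (EuclideanSpace ℝ (Fin d)))} :=
  MeasurableSpace.measurableSet_generateFrom ⟨C, rfl⟩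

theorem isClosed_setOf_subset (C : ConvexBodiesIn d E) :
    IsClosed {A : ConvexBodiesIn d E | ↑A.1 ⊆ (C.1 : Set (EuclideanSpace ℝ (Fin d)))} :=
  (NonemptyCompacts.isClosed_subsets_of_isClosed C.1.isCompact.isClosed).preimage
    continuous_subtype_val

theorem measurableSet_setOf_subset_of_isClosed (hE : IsCompact E) (hEc : Convex ℝ E)
    {s : Set (EuclideanSpace ℝ (Fin d))} (hs : IsClosed s) (hsc : Convex ℝ s) :
    MeasurableSet[.generateFrom (brackets d E)] {A : ConvexBodiesIn d E | (A.1 : Set _) ⊆ s} := by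
  rcases (s ∩ E).eq_empty_or_nonempty with h | hne
  · have : {A : ConvexBodiesIn d E | (A.1 : Set _) ⊆ s} = ∅ :=
      eq_empty_iff_forall_notMem.2 fun A hA =>
        (A.1.nonempty.mono (subset_inter hA A.2.1)).ne_empty h
    rw [this]
    exact @MeasurableSet.empty _ (.generateFrom _)
  · let C : ConvexBodiesIn d E :=
      ⟨⟨⟨s ∩ E, hE.inter_left hs⟩, hne⟩, inter_subset_right, hsc.inter hEc⟩
    convert measurableSet_bracket C using 1
    ext A
    exact ⟨fun h => subset_inter h A.2.1, fun h => h.trans inter_subset_left⟩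

theorem measurableSet_setOf_disjoint_closedBall (hE : IsCompact E) (hEc : Convex ℝ E)
    (x : EuclideanSpace ℝ (Fin d)) (r : ℝ) :
    MeasurableSet[.generateFrom (brackets d E)]
      {A : ConvexBodiesIn d E | Disjoint (A.1 : Set _) (closedBall x r)} := by
  obtain ⟨S, hSc, hSd⟩ := exists_countable_dense (StrongDual ℝ (EuclideanSpace ℝ (Fin d)))
  let Q : Set (StrongDual ℝ (EuclideanSpace ℝ (Fin d)) × ℚ) :=
    {p | p.1 ∈ S ∧ Disjoint {y | p.1 y ≤ p.2} (closedBall x r)}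
  have hQ : Q.Countable :=
    Countable.mono (show Q ⊆ S ×ˢ univ from fun p hp => ⟨hp.1, mem_univ _⟩)
      (hSc.prod countable_univ)
  have : {A : ConvexBodiesIn d E | Disjoint (A.1 : Set _) (closedBall x r)} =
      ⋃ p ∈ Q, {A : ConvexBodiesIn d E | (A.1 : Set _) ⊆ {y | p.1 y ≤ p.2}} := by
    ext A
    simp only [mem_ofPred_eq, mem_iUnion, exists_prop]
    constructor
    · intro hA
      obtain ⟨g, hg, c, hAg, hgB⟩ := exists_rat_halfSpace_separating_of_dense hSd A.2.2
        A.1.isCompact (convex_closedBall x r) isClosed_closedBall isBounded_closedBall hA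
      exact ⟨(g, c), ⟨hg, hgB⟩, hAg⟩
    · rintro ⟨p, hp, hAp⟩
      exact hp.2.mono_left hAp
  rw [this]
  exact .biUnion hQ fun p _ => measurableSet_setOf_subset_of_isClosed hE hEc
    (isClosed_le p.1.continuous continuous_const) (convex_halfSpace_le p.1.isLinear _)

theorem measurableSet_setOf_inter_nonempty_of_isOpen (hE : IsCompact E) (hEc : Convex ℝ E)
    {U : Set (EuclideanSpace ℝ (Fin d))} (hU : IsOpen U) :
    MeasurableSet[.generateFrom (brackets d E)]
      {A : ConvexBodiesIn d E | ((A.1 : Set _) ∩ U).Nonempty} := by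
  obtain ⟨T, hTc, rfl⟩ := hU.exists_countable_biUnion_closedBall
  have : {A : ConvexBodiesIn d E | ((A.1 : Set _) ∩ ⋃ p ∈ T, closedBall p.1 p.2).Nonempty} =
      ⋃ p ∈ T, {A : ConvexBodiesIn d E | Disjoint (A.1 : Set _) (closedBall p.1 p.2)}ᶜ := by
    ext A
    simp only [inter_iUnion₂, nonempty_iUnion, mem_ofPred_eq, mem_iUnion, mem_compl_iff,
      not_disjoint_iff_nonempty_inter, exists_prop]
  rw [this]
  exact .biUnion hTc fun p _ => (measurableSet_setOf_disjoint_closedBall hE hEc _ _).compl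

theorem measurableSet_setOf_subset_of_isOpen (hE : IsCompact E) (hEc : Convex ℝ E)
    {U : Set (EuclideanSpace ℝ (Fin d))} (hU : IsOpen U) :
    MeasurableSet[.generateFrom (brackets d E)] {A : ConvexBodiesIn d E | (A.1 : Set _) ⊆ U} := by
  have : {A : ConvexBodiesIn d E | (A.1 : Set _) ⊆ U} =
      ⋃ n : ℕ, {A : ConvexBodiesIn d E |
        ((A.1 : Set _) ∩ thickening (1 / (n + 1)) Uᶜ).Nonempty}ᶜ := by
    ext A
    simp only [mem_ofPred_eq, mem_iUnion, mem_compl_iff, not_nonempty_iff_eq_empty,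
      ← disjoint_iff_inter_eq_empty, ← disjoint_compl_right_iff_subset]
    exact A.1.isCompact.disjoint_iff_exists_disjoint_thickening hU.isClosed_compl
  rw [this]
  exact .iUnion fun n =>
    (measurableSet_setOf_inter_nonempty_of_isOpen hE hEc isOpen_thickening).compl

end ConvexBodiesIn

open ConvexBodiesIn in
theorem brackets_generate_borel_general {d : ℕ}
    (E : Set (EuclideanSpace ℝ (Fin d)))
    (hEc : IsCompact E) (hEconv : Convex ℝ E) :
    MeasurableSpace.generateFrom
        {B : Set (ConvexBodiesIn d E) | ∃ C : ConvexBodiesIn d E,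
          B = {A : ConvexBodiesIn d E |
            (A.1 : Set (EuclideanSpace ℝ (Fin d))) ⊆ (C.1 : Set (EuclideanSpace ℝ (Fin d)))}}
      = borel (ConvexBodiesIn d E) := by
  refine le_antisymm (MeasurableSpace.generateFrom_le ?_) ?_
  · rintro _ ⟨C, rfl⟩
    exact (MeasurableSpace.measurableSet_generateFrom (s := {s | IsOpen s})
      (isClosed_setOf_subset C).isOpen_compl).of_compl
  · rw [NonemptyCompacts.borel_subtype_eq_generateFrom]
    refine MeasurableSpace.generateFrom_le ?_
    rintro _ (⟨U, hU, rfl⟩ | ⟨U, hU, rfl⟩)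
    · exact measurableSet_setOf_subset_of_isOpen hEc hEconv hU
    · exact measurableSet_setOf_inter_nonempty_of_isOpen hEc hEconv hU

/-- The σ-algebra on the space `𝐂*` of nonempty compact convex subsets of a compact convex
set `E ⊆ ℝ^d` with nonempty interior generated by the brackets `[C] = {A ∈ 𝐂* : A ⊆ C}`
equals the Borel σ-algebra of the Hausdorff metric. -/
theorem brackets_generate_borel {d : ℕ} (hd : 1 ≤ d)
    (E : Set (EuclideanSpace ℝ (Fin d)))
    (hEc : IsCompact E) (hEconv : Convex ℝ E) (hEint : (interior E).Nonempty) :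
    MeasurableSpace.generateFrom
        {B : Set (ConvexBodiesIn d E) | ∃ C : ConvexBodiesIn d E,
          B = {A : ConvexBodiesIn d E |
            (A.1 : Set (EuclideanSpace ℝ (Fin d))) ⊆ (C.1 : Set (EuclideanSpace ℝ (Fin d)))}}
      = borel (ConvexBodiesIn d E) :=
  brackets_generate_borel_general E hEc hEconv
end

section
/- Fix a dimension d ≥ 1 and a compact convex set E ⊆ ℝ^d with nonempty interior, and let 𝐂* be the collection of nonempty compact convex subsets of E with the Hausdorff metric d_H. If μ and ν are two finite Borel measures on (𝐂*, d_H) such that μ([C]) = ν([C]) for every C ∈ 𝐂*, then μ = ν. (This is the measure-uniqueness step establishing that the convex hull is a complete statistic.) -/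
/-- We equip `𝐂*` with its Borel σ-algebra (for the Hausdorff metric topology). -/
noncomputable instance (d : ℕ) (E : Set (EuclideanSpace ℝ (Fin d))) :
    MeasurableSpace (ConvexBodiesIn d E) := borel (ConvexBodiesIn d E)

/-!
Brackets are closed and stable under intersection, so it suffices to show that they generate the
Borel σ-algebra. For a closed convex `C`, the set `{A | A ⊆ C}` is the bracket of `C ∩ E` (or
empty). A convex body misses a closed set `B` iff it lies in one of countably many closed convex
sets missing `B`, namely small thickenings of convex hulls of finitely many points of a dense
sequence; hence miss sets and hit sets are measurable. The Hausdorff ball of radius `ε` around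
`K` is `{A | A ⊆ cthickening ε K}` intersected with the hit sets of the `ε`-balls centred at a
countable dense subset of `K`, and by second countability closed balls generate all open sets.
-/

open Metric Set MeasureTheory MeasurableSpace
open TopologicalSpace (SeparableSpace denseSeq denseRange_denseSeq
  NonemptyCompacts isOpen_biUnion_countable)

theorem borel_le_of_measurableSet_closedBall {α : Type*} [PseudoMetricSpace α]
    [SecondCountableTopology α] {m : MeasurableSpace α}
    (h : ∀ x, ∀ ε > 0, MeasurableSet[m] (closedBall x ε)) : borel α ≤ m := by
  refine generateFrom_le fun U hU => ?_
  choose! ε hε hεU using Metric.isOpen_iff.1 hU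
  obtain ⟨T, hTU, hTc, hT⟩ :=
    isOpen_biUnion_countable U (fun x => ball x (ε x / 2)) fun _ _ => isOpen_ball
  have hU_eq : U = ⋃ x ∈ T, closedBall x (ε x / 2) := by
    refine subset_antisymm (fun x hx => ?_) (iUnion₂_subset fun x hx => ?_)
    · have hxT : x ∈ ⋃ y ∈ U, ball y (ε y / 2) :=
        mem_biUnion hx (mem_ball_self (half_pos (hε x hx)))
      rw [← hT] at hxT
      exact biUnion_mono subset_rfl (fun y _ => ball_subset_closedBall) hxT
    · exact (closedBall_subset_ball (half_lt_self (hε x (hTU hx)))).trans (hεU x (hTU hx))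
  rw [hU_eq]
  exact .biUnion hTc fun x hx => h x _ (half_pos (hε x (hTU hx)))

theorem hausdorffEDist_le_ofReal_iff {α : Type*} [PseudoMetricSpace α] {s t : Set α} {ε : ℝ} :
    hausdorffEDist s t ≤ ENNReal.ofReal ε ↔
      s ⊆ cthickening ε t ∧ t ⊆ cthickening ε s := by
  simp only [hausdorffEDist_def, sup_le_iff, iSup₂_le_iff, subset_def, mem_cthickening_iff]

theorem IsCompact.mem_cthickening_iff_inter_closedBall_nonempty {α : Type*} [PseudoMetricSpace α]
    {s : Set α} (hs : IsCompact s) {ε : ℝ} (hε : 0 ≤ ε) {x : α} :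
    x ∈ cthickening ε s ↔ (s ∩ closedBall x ε).Nonempty := by
  simp [hs.cthickening_eq_biUnion_closedBall hε, Set.Nonempty, dist_comm]

section Separable

variable {α : Type*} [PseudoMetricSpace α] [SeparableSpace α] [Nonempty α]

theorem IsCompact.exists_finset_cthickening_denseSeq {s : Set α} (hs : IsCompact s) {δ : ℝ}
    (hδ : 0 < δ) : ∃ F : Finset ℕ,
      s ⊆ cthickening δ (denseSeq α '' F) ∧ denseSeq α '' F ⊆ cthickening δ s := by
  obtain ⟨N, hN, hNfin, hsN⟩ := hs.elim_finite_subcover_image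
    (b := {n | denseSeq α n ∈ thickening δ s}) (c := fun n => ball (denseSeq α n) δ)
    (fun _ _ => isOpen_ball) fun x hx => by
      obtain ⟨n, hn⟩ := (denseRange_denseSeq α).exists_dist_lt x hδ
      exact mem_biUnion (mem_thickening_iff.2 ⟨x, hx, by rwa [dist_comm]⟩) (mem_ball.2 hn)
  refine ⟨hNfin.toFinset, fun x hx => ?_, ?_⟩
  · obtain ⟨n, hnN, hxn⟩ := mem_iUnion₂.1 (hsN hx)
    exact mem_cthickening_of_dist_le x _ δ _ (mem_image_of_mem _ (by simpa using hnN))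
      (mem_ball.1 hxn).le
  · rintro _ ⟨n, hn, rfl⟩
    exact thickening_subset_cthickening δ s (hN (by simpa using hn))

end Separable

section Normed

variable {X : Type*} [NormedAddCommGroup X] [NormedSpace ℝ X] [SeparableSpace X]

def thickenedHull (p : Finset ℕ × ℕ) : Set X :=
  cthickening (1 / (p.2 + 1)) (convexHull ℝ (denseSeq X '' p.1))

theorem isClosed_thickenedHull (p : Finset ℕ × ℕ) : IsClosed (thickenedHull (X := X) p) :=
  isClosed_cthickening

theorem convex_thickenedHull (p : Finset ℕ × ℕ) : Convex ℝ (thickenedHull (X := X) p) :=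
  (convex_convexHull ℝ _).cthickening _

theorem Disjoint.exists_subset_thickenedHull {A B : Set X} (hAB : Disjoint A B)
    (hA : IsCompact A) (hAc : Convex ℝ A) (hB : IsClosed B) :
    ∃ p, A ⊆ thickenedHull p ∧ Disjoint (thickenedHull p) B := by
  obtain ⟨δ, hδ, hdisj⟩ := hAB.exists_cthickenings hA hB
  obtain ⟨n, hn⟩ := exists_nat_one_div_lt (half_pos hδ)
  set η : ℝ := 1 / (n + 1)
  have hη : 0 < η := Nat.one_div_pos_of_nat
  obtain ⟨F, hAF, hFA⟩ := hA.exists_finset_cthickening_denseSeq hη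
  have hull_near : convexHull ℝ (denseSeq X '' F) ⊆ cthickening η A :=
    convexHull_min hFA (hAc.cthickening η)
  have near : thickenedHull (F, n) ⊆ cthickening δ A :=
    calc thickenedHull (F, n) ⊆ cthickening η (cthickening η A) :=
          cthickening_subset_of_subset η hull_near
      _ = cthickening (η + η) A := cthickening_cthickening hη.le hη.le A
      _ ⊆ cthickening δ A := cthickening_mono (by linarith) A
  exact ⟨(F, n), hAF.trans (cthickening_subset_of_subset η (subset_convexHull ℝ _)),
    hdisj.mono near (self_subset_cthickening B)⟩

end Normed

namespace ConvexBodiesIn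

variable {d : ℕ} {E : Set (EuclideanSpace ℝ (Fin d))}

local notation "X" => EuclideanSpace ℝ (Fin d)

def bracket (C : ConvexBodiesIn d E) : Set (ConvexBodiesIn d E) :=
  {A | (A.1 : Set X) ⊆ C.1}

theorem isClosed_bracket (C : ConvexBodiesIn d E) : IsClosed (bracket C) :=
  (NonemptyCompacts.isClosed_subsets_of_isClosed C.1.isCompact.isClosed).preimage
    continuous_subtype_val

theorem isPiSystem_range_bracket : IsPiSystem (range (bracket (d := d) (E := E))) := by
  rintro _ ⟨C, rfl⟩ _ ⟨D, rfl⟩ ⟨A, hAC, hAD⟩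
  refine ⟨⟨⟨⟨C.1 ∩ D.1, C.1.isCompact.inter_right D.1.isCompact.isClosed⟩,
    A.1.nonempty.mono (subset_inter hAC hAD)⟩,
    inter_subset_left.trans C.2.1, C.2.2.inter D.2.2⟩, ?_⟩
  ext B
  exact subset_inter_iff

theorem mem_closedBall_iff {A K : ConvexBodiesIn d E} {ε : ℝ} (hε : 0 ≤ ε) :
    A ∈ closedBall K ε ↔
      (A.1 : Set X) ⊆ cthickening ε K.1 ∧ (K.1 : Set X) ⊆ cthickening ε A.1 := by
  rw [mem_closedBall, ← edist_le_ofReal hε]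
  exact hausdorffEDist_le_ofReal_iff

theorem measurableSet_setOf_subset (hEc : IsCompact E) (hEconv : Convex ℝ E)
    {C : Set X} (hC : IsClosed C) (hCconv : Convex ℝ C) :
    MeasurableSet[generateFrom (range bracket)] {A : ConvexBodiesIn d E | (A.1 : Set X) ⊆ C} := by
  by_cases hne : (C ∩ E).Nonempty
  · refine measurableSet_generateFrom
      ⟨⟨⟨⟨C ∩ E, hEc.inter_left hC⟩, hne⟩, inter_subset_right,
        hCconv.inter hEconv⟩, ?_⟩
    ext A
    exact subset_inter_iff.trans (and_iff_left A.2.1)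
  · convert MeasurableSet.empty
    exact eq_empty_of_forall_notMem fun A hA => hne (A.1.nonempty.mono (subset_inter hA A.2.1))

theorem measurableSet_setOf_disjoint (hEc : IsCompact E) (hEconv : Convex ℝ E)
    {B : Set X} (hB : IsClosed B) :
    MeasurableSet[generateFrom (range bracket)]
      {A : ConvexBodiesIn d E | Disjoint (A.1 : Set X) B} := by
  have : {A : ConvexBodiesIn d E | Disjoint (A.1 : Set X) B} =
      ⋃ p, {A | (A.1 : Set X) ⊆ thickenedHull p} ∩ {_A | Disjoint (thickenedHull p) B} := by
    ext A
    simp only [mem_ofPred_eq, mem_iUnion, mem_inter_iff]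
    exact ⟨fun h => h.exists_subset_thickenedHull A.1.isCompact A.2.2 hB,
      fun ⟨_, hAp, hpB⟩ => hpB.mono_left hAp⟩
  rw [this]
  exact .iUnion fun p => (measurableSet_setOf_subset hEc hEconv (isClosed_thickenedHull p)
    (convex_thickenedHull p)).inter (.const _)

theorem measurableSet_closedBall (hEc : IsCompact E) (hEconv : Convex ℝ E)
    (K : ConvexBodiesIn d E) {ε : ℝ} (hε : 0 ≤ ε) :
    MeasurableSet[generateFrom (range bracket)] (closedBall K ε) := by
  obtain ⟨D, hDK, hDc, hKD⟩ := K.1.isCompact.isSeparable.exists_countable_dense_subset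
  have : closedBall K ε = {A | (A.1 : Set X) ⊆ cthickening ε K.1} ∩
      ⋂ k ∈ D, {A | Disjoint (A.1 : Set X) (closedBall k ε)}ᶜ := by
    ext A
    simp only [mem_closedBall_iff hε, mem_inter_iff, mem_iInter₂, mem_compl_iff, mem_ofPred_eq,
      not_disjoint_iff_nonempty_inter,
      ← A.1.isCompact.mem_cthickening_iff_inter_closedBall_nonempty hε]
    exact and_congr_right' ⟨fun h k hk => h (hDK hk),
      fun h => hKD.trans (isClosed_cthickening.closure_subset_iff.2 h)⟩
  rw [this]
  exact (measurableSet_setOf_subset hEc hEconv isClosed_cthickening (K.2.2.cthickening ε)).inter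
    (.biInter hDc fun k _ => (measurableSet_setOf_disjoint hEc hEconv isClosed_closedBall).compl)

theorem borel_eq_generateFrom_range_bracket (hEc : IsCompact E) (hEconv : Convex ℝ E) :
    borel (ConvexBodiesIn d E) = generateFrom (range bracket) :=
  le_antisymm
    (borel_le_of_measurableSet_closedBall fun K _ hε =>
      measurableSet_closedBall hEc hEconv K hε.le)
    (generateFrom_le <| forall_mem_range.2 fun C =>
      (measurableSet_generateFrom (s := {s | IsOpen s}) (isClosed_bracket C).isOpen_compl).of_compl)

end ConvexBodiesIn

theorem measures_eq_of_eq_on_brackets_general {d : ℕ}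
    (E : Set (EuclideanSpace ℝ (Fin d)))
    (hEc : IsCompact E) (hEconv : Convex ℝ E) (hEint : (interior E).Nonempty)
    (μ ν : MeasureTheory.Measure (ConvexBodiesIn d E))
    [MeasureTheory.IsFiniteMeasure μ] [MeasureTheory.IsFiniteMeasure ν]
    (h : ∀ C : ConvexBodiesIn d E,
      μ {A : ConvexBodiesIn d E |
          (A.1 : Set (EuclideanSpace ℝ (Fin d))) ⊆ (C.1 : Set (EuclideanSpace ℝ (Fin d)))}
      = ν {A : ConvexBodiesIn d E |
          (A.1 : Set (EuclideanSpace ℝ (Fin d))) ⊆ (C.1 : Set (EuclideanSpace ℝ (Fin d)))}) :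
    μ = ν := by
  refine ext_of_generate_finite (range ConvexBodiesIn.bracket)
    (ConvexBodiesIn.borel_eq_generateFrom_range_bracket hEc hEconv)
    ConvexBodiesIn.isPiSystem_range_bracket (forall_mem_range.2 h) ?_
  have bracket_E_eq_univ : ConvexBodiesIn.bracket
      ⟨⟨⟨E, hEc⟩, hEint.mono interior_subset⟩, subset_rfl, hEconv⟩ = univ :=
    eq_univ_of_forall fun A => A.2.1
  rw [← bracket_E_eq_univ]
  exact h _

/-- Two finite Borel measures on the space `𝐂*` of nonempty compact convex subsets of a
compact convex `E ⊆ ℝ^d` with nonempty interior that agree on all brackets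
`[C] = {A ∈ 𝐂* : A ⊆ C}` are equal. -/
theorem measures_eq_of_eq_on_brackets {d : ℕ} (hd : 1 ≤ d)
    (E : Set (EuclideanSpace ℝ (Fin d)))
    (hEc : IsCompact E) (hEconv : Convex ℝ E) (hEint : (interior E).Nonempty)
    (μ ν : MeasureTheory.Measure (ConvexBodiesIn d E))
    [MeasureTheory.IsFiniteMeasure μ] [MeasureTheory.IsFiniteMeasure ν]
    (h : ∀ C : ConvexBodiesIn d E,
      μ {A : ConvexBodiesIn d E |
          (A.1 : Set (EuclideanSpace ℝ (Fin d))) ⊆ (C.1 : Set (EuclideanSpace ℝ (Fin d)))}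
      = ν {A : ConvexBodiesIn d E |
          (A.1 : Set (EuclideanSpace ℝ (Fin d))) ⊆ (C.1 : Set (EuclideanSpace ℝ (Fin d)))}) :
    μ = ν :=
  measures_eq_of_eq_on_brackets_general E hEc hEconv hEint μ ν h
end

section
/- Let 0 < a < b. There is no function f : ℕ → ℝ such that for every λ ∈ (a, b) the family (e^{-λ} λ^k / k! · f(k))_{k∈ℕ} is summable with ∑_{k=0}^∞ e^{-λ} λ^k / k! · f(k) = 1/λ. In other words, there exists no unbiased estimator of 1/λ based on a single Poisson(λ) observation, for λ ranging over a nonempty open interval. -/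
/-!
With `c k = f k / k!`, unbiasedness says that the power series `g x = ∑ c k x ^ k` equals
`eˣ / x` on `(a, b)`. The series converges on `(-b, b)`, so `x g x - eˣ` is real-analytic on a
ball around `0` and vanishes on an interval, hence everywhere on the ball by the identity
theorem; but at `x = 0` it equals `-1`.
-/

open Real Set Filter Topology FormalMultilinearSeries
open scoped Nat

lemma hasSum_div_factorial_mul_pow_of_hasSum_poisson {f : ℕ → ℝ} {l s : ℝ}
    (h : HasSum (fun k => exp (-l) * l ^ k / k ! * f k) s) :
    HasSum (fun k => f k / k ! * l ^ k) (exp l * s) := by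
  have hweights :
      (fun k => f k / k ! * l ^ k) = fun k => exp l * (exp (-l) * l ^ k / k ! * f k) := by
    funext k
    have hexp : exp l * exp (-l) = 1 := by rw [← exp_add, add_neg_cancel, exp_zero]
    linear_combination -(l ^ k / k ! * f k) * hexp
  exact hweights ▸ h.mul_left (exp l)

lemma FormalMultilinearSeries.enorm_le_radius_ofScalars_of_summable
    {𝕜 : Type*} [NontriviallyNormedField 𝕜] {c : ℕ → 𝕜} {x : 𝕜}
    (h : Summable fun n => c n * x ^ n) : ‖x‖ₑ ≤ (ofScalars 𝕜 c).radius :=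
  (ofScalars 𝕜 c).le_radius_of_tendsto <| h.tendsto_atTop_zero.norm.congr fun n => by
    simp [norm_mul, norm_pow]

theorem not_forall_hasSum_mul_pow_exp_div {c : ℕ → ℝ} {a b : ℝ} (ha : 0 < a) (hab : a < b) :
    ¬ ∀ x ∈ Ioo a b, HasSum (fun k => c k * x ^ k) (exp x / x) := by
  intro h
  obtain ⟨m, ham, hmb⟩ := exists_between hab
  have hm_pos : 0 < m := ha.trans ham
  have hball : Metric.ball (0 : ℝ) m ⊆ Metric.eball 0 (ofScalars ℝ c).radius := by
    rw [← Metric.eball_ofReal, ← Real.enorm_eq_ofReal hm_pos.le]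
    exact Metric.eball_subset_eball
      (enorm_le_radius_ofScalars_of_summable (h m ⟨ham, hmb⟩).summable)
  set F : ℝ → ℝ := fun x => x * ofScalarsSum c x - exp x
  have hF : AnalyticOnNhd ℝ F (Metric.ball 0 m) := fun x hx =>
    (analyticAt_id.mul ((ofScalars ℝ c).analyticOnNhd x (hball hx))).sub analyticAt_rexp
  have hF_Ioo : ∀ x ∈ Ioo a m, F x = 0 := by
    intro x hx
    rw [sub_eq_zero, ofScalars_sum_eq]
    simp only [smul_eq_mul]
    rw [(h x ⟨hx.1, hx.2.trans hmb⟩).tsum_eq, mul_div_cancel₀ _ (ha.trans hx.1).ne']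
  have hF_freq : ∃ᶠ x in 𝓝[≠] a, F x = 0 :=
    (eventually_of_mem (Ioo_mem_nhdsGT ham) hF_Ioo).frequently.filter_mono
      (nhdsWithin_mono _ fun x hx => ne_of_gt hx)
  have := hF.eqOn_zero_of_preconnected_of_frequently_eq_zero (convex_ball 0 m).isPreconnected
    (by simpa [abs_of_pos ha] using ham) hF_freq (Metric.mem_ball_self hm_pos)
  simp [F] at this

/-- There is no unbiased estimator of `1/λ` from a single Poisson(λ) observation, for `λ`
ranging over a nonempty open interval `(a, b)` with `0 < a < b`. -/
theorem no_unbiased_estimator_of_inv_poisson_mean (a b : ℝ) (ha : 0 < a) (hab : a < b) :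
    ¬ ∃ f : ℕ → ℝ, ∀ l ∈ Set.Ioo a b,
        Summable (fun k : ℕ => Real.exp (-l) * l ^ k / (Nat.factorial k : ℝ) * f k) ∧
        ∑' k : ℕ, Real.exp (-l) * l ^ k / (Nat.factorial k : ℝ) * f k = 1 / l := by
  rintro ⟨f, hf⟩
  refine not_forall_hasSum_mul_pow_exp_div (c := fun k => f k / k !) ha hab fun l hl => ?_
  obtain ⟨hsummable, htsum⟩ := hf l hl
  simpa only [mul_one_div] using
    hasSum_div_factorial_mul_pow_of_hasSum_poisson (hsummable.hasSum_iff.mpr htsum)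
end

section
/- There exists a constant c ≥ 1 such that for every λ > 0 the variance of 1/(N+1) under the Poisson distribution with parameter λ satisfies Var_λ(1/(N+1)) := ∑_{k=0}^∞ e^{-λ} λ^k / k! · 1/(k+1)² − ( ∑_{k=0}^∞ e^{-λ} λ^k / k! · 1/(k+1) )² ≤ c · min(1, λ^{-3}). -/
/-!
For `N ~ Poisson(λ)`, since `(k + j)! = k! (k+1)(k+2)⋯(k+j)`, the inverse factorial moments
`E[1/((N+1)⋯(N+j))]` equal `P(N ≥ j) / λ^j`. The pointwise bound
`1/(k+1)² ≤ 1/((k+1)(k+2)) + 3/((k+1)(k+2)(k+3))` then gives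
`E[1/(N+1)²] ≤ P(N ≥ 2)/λ² + 3 P(N ≥ 3)/λ³`, and `P(N ≥ 2) ≤ P(N ≥ 1)²` (i.e. `e^{-λ} ≥ 1 - λ`)
shows that the first term is at most `E[1/(N+1)]²`. Hence the variance is at most `3/λ³`;
it is at most `1` because `1/(N+1)² ≤ 1`.
-/

open Finset Real
open scoped Nat

noncomputable def poissonWeight (l : ℝ) (k : ℕ) : ℝ := exp (-l) * l ^ k / k !

/-- `poissonTail l j` is the Poisson tail probability `P(N ≥ j)`. -/
noncomputable def poissonTail (l : ℝ) (j : ℕ) : ℝ := 1 - exp (-l) * ∑ i ∈ range j, l ^ i / i !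

lemma hasSum_pow_add_div_factorial (l : ℝ) (j : ℕ) :
    HasSum (fun k ↦ l ^ (k + j) / (k + j)!) (exp l - ∑ i ∈ range j, l ^ i / i !) := by
  refine (hasSum_nat_add_iff' (f := fun n ↦ l ^ n / (n ! : ℝ)) j).2 ?_
  rw [exp_eq_exp_ℝ]
  exact NormedSpace.expSeries_div_hasSum_exp l

lemma hasSum_poissonWeight_mul_inv_ascFactorial {l : ℝ} (hl : l ≠ 0) (j : ℕ) :
    HasSum (fun k ↦ poissonWeight l k * (1 / ((k + 1).ascFactorial j : ℝ)))
      (poissonTail l j / l ^ j) := by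
  convert! (hasSum_pow_add_div_factorial l j).mul_left (exp (-l) / l ^ j) using 1
  · funext k
    rw [poissonWeight, ← Nat.factorial_mul_ascFactorial, Nat.cast_mul, pow_add]
    have : ((k + 1).ascFactorial j : ℝ) ≠ 0 := by positivity
    field_simp
  · rw [poissonTail, exp_neg]
    field_simp

lemma poissonTail_le_one {l : ℝ} (hl : 0 ≤ l) (j : ℕ) : poissonTail l j ≤ 1 := by
  rw [poissonTail, sub_le_self_iff]
  positivity

lemma poissonTail_two_le_sq (l : ℝ) : poissonTail l 2 ≤ poissonTail l 1 ^ 2 := by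
  have h := add_one_le_exp (-l)
  have hpos := exp_pos (-l)
  simp only [poissonTail, sum_range_succ, sum_range_zero]
  norm_num
  nlinarith

lemma inv_succ_sq_le (x : ℝ) (hx : 0 ≤ x) :
    1 / (x + 1) ^ 2 ≤ 1 / ((x + 1) * (x + 2)) + 3 * (1 / ((x + 1) * (x + 2) * (x + 3))) := by
  field_simp
  nlinarith

lemma poissonWeight_variance_inv_succ_le {l : ℝ} (hl : 0 < l) :
    ∑' k, poissonWeight l k * (1 / ((k : ℝ) + 1) ^ 2)
      - (∑' k, poissonWeight l k * (1 / ((k : ℝ) + 1))) ^ 2 ≤ 3 * min 1 (1 / l ^ 3) := by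
  have hasSum_asc := hasSum_poissonWeight_mul_inv_ascFactorial hl.ne'
  have h0 : HasSum (poissonWeight l) 1 := by simpa [poissonTail] using hasSum_asc 0
  have h1 : HasSum (fun k ↦ poissonWeight l k * (1 / ((k : ℝ) + 1))) (poissonTail l 1 / l) := by
    convert hasSum_asc 1 using 5 <;> simp [Nat.ascFactorial]
  have h2 : HasSum (fun k ↦ poissonWeight l k * (1 / (((k : ℝ) + 1) * (k + 2))))
      (poissonTail l 2 / l ^ 2) := by
    convert hasSum_asc 2 using 5; simp [Nat.ascFactorial]; ring
  have h3 : HasSum (fun k ↦ poissonWeight l k * (1 / (((k : ℝ) + 1) * (k + 2) * (k + 3))))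
      (poissonTail l 3 / l ^ 3) := by
    convert hasSum_asc 3 using 5; simp [Nat.ascFactorial]; ring
  have hw (k : ℕ) : 0 ≤ poissonWeight l k := by unfold poissonWeight; positivity
  have sq_le_weight (k : ℕ) : poissonWeight l k * (1 / ((k : ℝ) + 1) ^ 2) ≤ poissonWeight l k :=
    mul_le_of_le_one_right (hw k) (div_le_one_of_le₀ (one_le_pow₀ (by simp)) (by positivity))
  have hsq : Summable fun k ↦ poissonWeight l k * (1 / ((k : ℝ) + 1) ^ 2) :=
    h0.summable.of_nonneg_of_le (fun k ↦ mul_nonneg (hw k) (by positivity)) sq_le_weight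
  have second_le_one : ∑' k, poissonWeight l k * (1 / ((k : ℝ) + 1) ^ 2) ≤ 1 :=
    hasSum_le sq_le_weight hsq.hasSum h0
  have second_le : ∑' k, poissonWeight l k * (1 / ((k : ℝ) + 1) ^ 2)
      ≤ poissonTail l 2 / l ^ 2 + 3 * (poissonTail l 3 / l ^ 3) :=
    hasSum_le (fun k ↦ by
      rw [mul_left_comm 3, ← mul_add]
      exact mul_le_mul_of_nonneg_left (inv_succ_sq_le k k.cast_nonneg) (hw k))
      hsq.hasSum (h2.add (h3.mul_left 3))
  have tail2_le : poissonTail l 2 / l ^ 2 ≤ (poissonTail l 1 / l) ^ 2 := by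
    rw [div_pow]; gcongr; exact poissonTail_two_le_sq l
  have tail3_le : poissonTail l 3 / l ^ 3 ≤ 1 / l ^ 3 := by
    gcongr; exact poissonTail_le_one hl.le 3
  rw [h1.tsum_eq, mul_min_of_nonneg _ _ (by norm_num : (0 : ℝ) ≤ 3)]
  refine le_min ?_ ?_ <;> linarith [sq_nonneg (poissonTail l 1 / l)]

/-- There is a constant `c ≥ 1` such that for every `λ > 0`, the variance of `1/(N+1)`
under the Poisson(λ) distribution is at most `c · min(1, λ⁻³)`. -/
theorem poisson_var_inv_succ_bound :
    ∃ c : ℝ, 1 ≤ c ∧ ∀ l : ℝ, 0 < l →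
      (∑' k : ℕ, Real.exp (-l) * l ^ k / (Nat.factorial k : ℝ) * (1 / ((k : ℝ) + 1) ^ 2))
        - (∑' k : ℕ, Real.exp (-l) * l ^ k / (Nat.factorial k : ℝ) * (1 / ((k : ℝ) + 1))) ^ 2
      ≤ c * min 1 (1 / l ^ 3) :=
  ⟨3, by norm_num, fun _ hl ↦ poissonWeight_variance_inv_succ_le hl⟩
end

section
/- For every β ∈ (0,1) and all constants b₁ ≥ 1, b₂ > 0, there exist constants b₃ > 0 and c > 0 such that for every real n ≥ 1, ∑_{k=0}^∞ e^{-2n} n^k / k! · min( e^n , b₁ · exp( b₂ · n · (k+1)^{-β} ) ) ≤ b₃ · exp( −c · n^{1−β} ). (Exponential-moment Poissonisation bound: combining the trivial bound e^n with a fixed-sample exponential-moment bound of order exp(b₂ n k^{-β}) and averaging over a Poisson(n) number of points yields a stretched-exponentially small quantity; with β = 2/(d+1) this gives the bound e^{-λ|C|} E[exp(λ|C∖Ĉ|)] ≤ b₃ exp(−c (λ|C|)^{(d−1)/(d+1)}).) -/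
/-!
Split the Poisson sum at `k = n/2`. For `k ≤ n/2` use the trivial bound `e^n`: by the Chernoff
estimate `n^k ≤ 2^{n/2} (n/2)^k`, these terms add up to at most `e^{-(1 - log 2) n/2}`. For
`k > n/2` the second bound is at most `b₁ e^{K n^{1-β}}` with `K = b₂ 2^β`, and the remaining
weight `e^{-2n} ∑ n^k/k! = e^{-n}` beats it: Young's inequality `A n^{1-β} ≤ n + A^{1/β}` with
`A = K + c` gives `K n^{1-β} - n ≤ A^{1/β} - c n^{1-β}`.
-/

open Real
open scoped Nat

lemma hasSum_pow_div_factorial (x : ℝ) : HasSum (fun k : ℕ => x ^ k / k !) (exp x) := by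
  rw [exp_eq_exp_ℝ]
  exact NormedSpace.expSeries_div_hasSum_exp x

lemma mul_rpow_le_add_rpow_one_div {A x β : ℝ} (hA : 0 ≤ A) (hx : 0 ≤ x) (hβ0 : 0 < β)
    (hβ1 : β ≤ 1) : A * x ^ (1 - β) ≤ x + A ^ (1 / β) := by
  have young := geom_mean_le_arith_mean2_weighted (sub_nonneg.2 hβ1) hβ0.le hx
    (rpow_nonneg hA (1 / β)) (sub_add_cancel 1 β)
  rw [← rpow_mul hA, one_div_mul_cancel hβ0.ne', rpow_one] at young
  nlinarith [rpow_nonneg hA (1 / β)]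

lemma mul_pow_le_rpow_mul_pow {a y t : ℝ} (ha : 1 ≤ a) (hy : 0 ≤ y) {k : ℕ} (hk : (k : ℝ) ≤ t) :
    (a * y) ^ k ≤ a ^ t * y ^ k := by
  rw [mul_pow, ← rpow_natCast a k]
  gcongr

lemma mul_rpow_neg_le_of_half_le {n x β : ℝ} (hn : 0 < n) (hβ : 0 ≤ β) (hx : n / 2 ≤ x) :
    n * x ^ (-β) ≤ 2 ^ β * n ^ (1 - β) :=
  calc n * x ^ (-β) ≤ n * (n / 2) ^ (-β) :=
        mul_le_mul_of_nonneg_left (rpow_le_rpow_of_nonpos (by positivity) hx (neg_nonpos.2 hβ))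
          hn.le
    _ = 2 ^ β * n ^ (1 - β) := by
        rw [div_rpow hn.le zero_le_two, rpow_neg zero_le_two, sub_eq_add_neg, rpow_add hn,
          rpow_one]
        field_simp

section

variable {n β b₁ b₂ : ℝ}

lemma poisson_min_term_le (hn : 0 < n) (hβ : 0 ≤ β) (hb₁ : 0 ≤ b₁) (hb₂ : 0 ≤ b₂) (k : ℕ) :
    exp (-(2 * n)) * n ^ k / k ! * min (exp n) (b₁ * exp (b₂ * n * ((k : ℝ) + 1) ^ (-β)))
      ≤ exp (-n) * 2 ^ (n / 2) * ((n / 2) ^ k / k !)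
        + exp (-(2 * n)) * b₁ * exp (b₂ * 2 ^ β * n ^ (1 - β)) * (n ^ k / k !) := by
  rcases le_or_gt (k : ℝ) (n / 2) with hk | hk
  · have chernoff : n ^ k ≤ 2 ^ (n / 2) * (n / 2) ^ k := by
      simpa [mul_div_cancel₀] using mul_pow_le_rpow_mul_pow one_le_two (by positivity : 0 ≤ n / 2) hk
    calc _ ≤ exp (-(2 * n)) * n ^ k / k ! * exp n := by gcongr; exact min_le_left _ _
      _ = exp (-n) * n ^ k / k ! := by
          rw [show -n = -(2 * n) + n by ring, exp_add]; ring
      _ ≤ exp (-n) * (2 ^ (n / 2) * (n / 2) ^ k) / k ! := by gcongr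
      _ = exp (-n) * 2 ^ (n / 2) * ((n / 2) ^ k / k !) := by ring
      _ ≤ _ := le_add_of_nonneg_right (by positivity)
  · have hexp : b₂ * n * ((k : ℝ) + 1) ^ (-β) ≤ b₂ * 2 ^ β * n ^ (1 - β) := by
      rw [mul_assoc, mul_assoc]
      exact mul_le_mul_of_nonneg_left (mul_rpow_neg_le_of_half_le hn hβ (by linarith)) hb₂
    calc _ ≤ exp (-(2 * n)) * n ^ k / k ! * (b₁ * exp (b₂ * n * ((k : ℝ) + 1) ^ (-β))) := by
          gcongr; exact min_le_right _ _
      _ ≤ exp (-(2 * n)) * n ^ k / k ! * (b₁ * exp (b₂ * 2 ^ β * n ^ (1 - β))) := by gcongr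
      _ = exp (-(2 * n)) * b₁ * exp (b₂ * 2 ^ β * n ^ (1 - β)) * (n ^ k / k !) := by ring
      _ ≤ _ := le_add_of_nonneg_left (by positivity)

lemma tsum_poisson_min_le (hn : 0 < n) (hβ : 0 ≤ β) (hb₁ : 0 ≤ b₁) (hb₂ : 0 ≤ b₂) :
    ∑' k : ℕ, exp (-(2 * n)) * n ^ k / k ! *
        min (exp n) (b₁ * exp (b₂ * n * ((k : ℝ) + 1) ^ (-β)))
      ≤ exp (-((1 - log 2) / 2 * n)) + b₁ * exp (b₂ * 2 ^ β * n ^ (1 - β) - n) := by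
  have hsum := ((hasSum_pow_div_factorial (n / 2)).mul_left (exp (-n) * 2 ^ (n / 2))).add
    ((hasSum_pow_div_factorial n).mul_left (exp (-(2 * n)) * b₁ * exp (b₂ * 2 ^ β * n ^ (1 - β))))
  have hterm := poisson_min_term_le hn hβ hb₁ hb₂
  have hsummable : Summable fun k : ℕ => exp (-(2 * n)) * n ^ k / k ! *
      min (exp n) (b₁ * exp (b₂ * n * ((k : ℝ) + 1) ^ (-β))) :=
    .of_nonneg_of_le (fun k => by positivity) hterm hsum.summable
  refine (hasSum_le hterm hsummable.hasSum hsum).trans_eq ?_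
  rw [rpow_def_of_pos two_pos]
  simp only [mul_assoc, ← exp_add]
  rw [mul_left_comm, ← exp_add]
  ring_nf

end

/-- Exponential-moment Poissonisation bound: for `β ∈ (0,1)`, `b₁ ≥ 1`, `b₂ > 0` there are
`b₃, c > 0` such that for all real `n ≥ 1`,
`∑_k e^{-2n} n^k/k! · min(e^n, b₁ e^{b₂ n (k+1)^{-β}}) ≤ b₃ e^{-c n^{1-β}}`. -/
theorem poissonisation_exponential_bound (β b₁ b₂ : ℝ)
    (hβ0 : 0 < β) (hβ1 : β < 1) (hb₁ : 1 ≤ b₁) (hb₂ : 0 < b₂) :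
    ∃ b₃ c : ℝ, 0 < b₃ ∧ 0 < c ∧ ∀ n : ℝ, 1 ≤ n →
      ∑' k : ℕ, Real.exp (-(2 * n)) * n ^ k / (Nat.factorial k : ℝ) *
          min (Real.exp n) (b₁ * Real.exp (b₂ * n * ((k : ℝ) + 1) ^ (-β)))
        ≤ b₃ * Real.exp (-c * n ^ (1 - β)) := by
  set c := (1 - log 2) / 2 with hc_def
  set K := b₂ * 2 ^ β
  have hc : 0 < c := by rw [hc_def]; linarith [log_two_lt_d9]
  refine ⟨1 + b₁ * exp ((K + c) ^ (1 / β)), c, by positivity, hc, fun n hn => ?_⟩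
  have hn0 : 0 < n := by linarith
  have hpow_le : n ^ (1 - β) ≤ n := rpow_le_self_of_one_le hn (by linarith)
  have young := mul_rpow_le_add_rpow_one_div (by positivity : 0 ≤ K + c) hn0.le hβ0 hβ1.le
  calc _ ≤ exp (-(c * n)) + b₁ * exp (K * n ^ (1 - β) - n) :=
        tsum_poisson_min_le hn0 hβ0.le (by linarith) hb₂.le
    _ ≤ exp (-c * n ^ (1 - β)) + b₁ * exp ((K + c) ^ (1 / β) + -c * n ^ (1 - β)) := by
        gcongr <;> nlinarith
    _ = _ := by rw [exp_add]; ring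
end
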